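/- arXiv:1409.0121 — 10 statements merged into one kernel-verified Lean document; each statement's English description precedes it below -/
import Mathlib

section
/- For each j ∈ {1,…,k}, the quotient q_j = (N − r_j)/(d·m_j) is an integer with 0 ≤ q_j < M_j, and it satisfies the congruence q_j ≡ Σ_{i=1, i≠j}^{k} ((r_i − r_j)/d)·u_i·(M_j/m_i) (mod M_j), where M_j = M/m_j. -/
/-- For each `j`, the quotient `q j = (N - r j) / (d * m j)` is an integer with
`0 ≤ q j < M j` (where `M j = M / m j = ∏ l ≠ j, m l`) and
`q j ≡ ∑_{i ≠ j} ((r i - r j) / d) * u i * (M j / m i)  (mod M j)`. -/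
theorem quotient_congruence
    (k : ℕ) (hk : 0 < k) (d : ℤ) (hd : 0 < d)
    (m : Fin k → ℤ) (hm : ∀ i, 0 < m i)
    (hcop : ∀ i j, i ≠ j → IsCoprime (m i) (m j))
    (M : ℤ) (hM : M = ∏ i, m i)
    (r : Fin k → ℤ) (hr : ∀ i, 0 ≤ r i ∧ r i < d * m i)
    (hcong : ∀ i j, d ∣ r i - r j)
    (N : ℤ) (hNrange : 0 ≤ N ∧ N < d * M)
    (hN : ∀ i, N ≡ r i [ZMOD d * m i])
    (u : Fin k → ℤ)
    (hu : ∑ i, u i * ∏ j ∈ Finset.univ.erase i, m j = 1) :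
    ∀ j : Fin k,
      d * m j ∣ N - r j ∧
      0 ≤ (N - r j) / (d * m j) ∧
      (N - r j) / (d * m j) < ∏ l ∈ Finset.univ.erase j, m l ∧
      (N - r j) / (d * m j) ≡
        (∑ i ∈ Finset.univ.erase j,
          ((r i - r j) / d) * u i * ∏ l ∈ (Finset.univ.erase j).erase i, m l)
        [ZMOD ∏ l ∈ Finset.univ.erase j, m l] := by
  intro j
  have hdm : 0 < d * m j := mul_pos hd (hm j)
  have hdvd : d * m j ∣ N - r j := (hN j).symm.dvd
  obtain ⟨q, hq⟩ := hdvd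
  have hqdiv : (N - r j) / (d * m j) = q := by
    rw [hq, Int.mul_ediv_cancel_left _ (ne_of_gt hdm)]
  set Mj : ℤ := ∏ l ∈ Finset.univ.erase j, m l with hMj
  have hMjpos : 0 < Mj := Finset.prod_pos (fun i _ => hm i)
  have hMsplit : M = m j * Mj := by
    rw [hM, ← Finset.mul_prod_erase _ _ (Finset.mem_univ j)]
  have hq0 : 0 ≤ q := by nlinarith [(hr j).2, hNrange.1]
  have hqM : q < Mj := by
    have h1 : d * m j * q < d * m j * Mj := by nlinarith [(hr j).1, hNrange.2]
    exact lt_of_mul_lt_mul_left h1 hdm.le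
  refine ⟨⟨q, hq⟩, by rw [hqdiv]; exact hq0, by rw [hqdiv]; exact hqM, ?_⟩
  rw [hqdiv]
  -- the congruence
  have hs : ∀ i : Fin k, d * ((r i - r j) / d) = r i - r j := fun i =>
    Int.mul_ediv_cancel' (hcong i j)
  have hkey : ∀ i ∈ Finset.univ.erase j, m i ∣ (r i - r j) / d - q * m j := by
    intro i _

    have hNi : d * m i ∣ r i - N := (hN i).dvd
    have h2 : r i - N = d * ((r i - r j) / d - q * m j) := by
      linear_combination -hs i - hq
    rw [h2] at hNi
    exact (mul_dvd_mul_iff_left (ne_of_gt hd)).mp hNi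
  rw [Int.modEq_iff_dvd]
  have hqe : q = ∑ i, q * (u i * ∏ l ∈ Finset.univ.erase i, m l) := by
    rw [← Finset.mul_sum, hu, mul_one]
  have hP : ∀ i ∈ Finset.univ.erase j,
      (∏ l ∈ Finset.univ.erase i, m l)
        = m j * ∏ l ∈ (Finset.univ.erase j).erase i, m l := by
    intro i hi
    have hij : i ≠ j := Finset.ne_of_mem_erase hi
    rw [← Finset.mul_prod_erase _ _
        (Finset.mem_erase.mpr ⟨hij.symm, Finset.mem_univ j⟩), Finset.erase_right_comm]
  have hrw : (∑ i ∈ Finset.univ.erase j,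
        ((r i - r j) / d) * u i * ∏ l ∈ (Finset.univ.erase j).erase i, m l) - q
      = (∑ i ∈ Finset.univ.erase j,
          ((r i - r j) / d - q * m j) * (u i * ∏ l ∈ (Finset.univ.erase j).erase i, m l))
        - q * (u j * Mj) := by
    conv_lhs => rw [hqe, ← Finset.add_sum_erase _ _ (Finset.mem_univ j)]
    rw [← hMj, sub_add_eq_sub_sub, sub_right_comm, ← Finset.sum_sub_distrib]
    congr 1
    refine Finset.sum_congr rfl fun i hi => ?_
    rw [hP i hi]; ring
  rw [hrw]
  refine dvd_sub (Finset.dvd_sum fun i hi => ?_) ⟨q * u j, by ring⟩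
  obtain ⟨c, hc⟩ := hkey i hi
  have hMi : Mj = m i * ∏ l ∈ (Finset.univ.erase j).erase i, m l :=
    (Finset.mul_prod_erase _ _ hi).symm
  rw [hc]
  exact ⟨c * u i, by rw [hMi]; ring⟩
end

section
/- The quotient q_1 = (N − r_1)/(d·m_1) can be recovered exactly from the corrupted remainders: q_1 is the unique integer with 0 ≤ q_1 < M_1 satisfying q_1 ≡ Σ_{i=2}^{k} [(r̄_i − r̄_1)/d]·u_i·(M_1/m_i) (mod M_1), where M_1 = M/m_1 and [x] denotes the integer nearest to x (the hypotheses guarantee no ties occur). -/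
/-!
Write `q i = (N - r i) / (d * m i)` and `r i - r 0 = d * c i`. Comparing `N = r i + d * m i * q i`
for `i` and for `0` gives `m 0 * q 0 ≡ c i (mod m i)`, so `q 0` is the Chinese-remainder
reconstruction of the residues `c i * (m 0)⁻¹ mod m i`, which is the sum `S` when `c i` is known.
Since the two errors perturb `(r̄ i - r̄ 0) / d` by less than `1 / 2`, rounding recovers `c i`.
-/

theorem round_intCast_mul_add_div {K : Type*} [Field K] [LinearOrder K] [IsStrictOrderedRing K]
    [FloorRing K] {d c e : ℤ} (h : 2 * |e| < d) :
    round (((d * c + e : ℤ) : K) / d) = c := by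
  have hd : (0 : K) < d := Int.cast_pos.2 (by linarith [abs_nonneg e])
  have he : |(e : K) / d| < 1 / 2 := by
    rw [abs_div, abs_of_pos hd, div_lt_iff₀ hd]
    have : 2 * |(e : K)| < d := by rw [← Int.cast_abs]; exact_mod_cast h
    linarith
  rw [round_eq_iff, Int.cast_add, Int.cast_mul, add_div, mul_div_cancel_left₀ _ hd.ne']
  constructor <;> linarith [abs_lt.1 he]

theorem sum_mul_prod_erase_modEq {ι : Type*} [DecidableEq ι] (s : Finset ι) (a m : ι → ℤ) {i : ι}
    (hi : i ∈ s) :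
    ∑ j ∈ s, a j * ∏ l ∈ s.erase j, m l ≡ a i * ∏ l ∈ s.erase i, m l [ZMOD m i] := by
  have hrest : ∑ j ∈ s.erase i, a j * ∏ l ∈ s.erase j, m l ≡ 0 [ZMOD m i] :=
    Int.modEq_zero_iff_dvd.2 <| Finset.dvd_sum fun j hj => dvd_mul_of_dvd_right
      (Finset.dvd_prod_of_mem m (Finset.mem_erase.2 ⟨(Finset.ne_of_mem_erase hj).symm, hi⟩)) _
  rw [← Finset.add_sum_erase s _ hi]
  simpa using hrest.add_left (a i * ∏ l ∈ s.erase i, m l)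

theorem modEq_sum_mul_prod_erase {ι : Type*} [DecidableEq ι] {s : Finset ι} {m c u : ι → ℤ}
    {m₀ q : ℤ} (hcop : (s : Set ι).Pairwise fun i j => IsCoprime (m i) (m j))
    (hcop₀ : ∀ i ∈ s, IsCoprime (m i) m₀)
    (hu : ∀ i ∈ s, u i * (m₀ * ∏ l ∈ s.erase i, m l) ≡ 1 [ZMOD m i])
    (hq : ∀ i ∈ s, m₀ * q ≡ c i [ZMOD m i]) :
    q ≡ ∑ i ∈ s, c i * u i * ∏ l ∈ s.erase i, m l [ZMOD ∏ i ∈ s, m i] := by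
  refine Int.modEq_iff_dvd.2 (Finset.prod_dvd_of_coprime hcop fun i hi => ?_)
  refine (hcop₀ i hi).dvd_of_dvd_mul_left ?_
  rw [mul_sub, ← Int.modEq_iff_dvd]
  calc m₀ * q ≡ c i * 1 [ZMOD m i] := by rw [mul_one]; exact hq i hi
    _ ≡ c i * (u i * (m₀ * ∏ l ∈ s.erase i, m l)) [ZMOD m i] := (hu i hi).symm.mul_left _
    _ = m₀ * (c i * u i * ∏ l ∈ s.erase i, m l) := by ring
    _ ≡ m₀ * ∑ j ∈ s, c j * u j * ∏ l ∈ s.erase j, m l [ZMOD m i] :=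
      (sum_mul_prod_erase_modEq s (fun j => c j * u j) m hi).symm.mul_left _

theorem mul_quotient_modEq {d n m₀ N r r₀ q c : ℤ} (hd : d ≠ 0) (hN : N ≡ r [ZMOD d * n])
    (hq : N - r₀ = d * m₀ * q) (hc : r - r₀ = d * c) : m₀ * q ≡ c [ZMOD n] :=
  Int.ModEq.mul_left_cancel' hd (by rw [← mul_assoc, ← hq, ← hc]; exact hN.sub_right r₀)

theorem nonneg_and_lt_of_sub_eq_mul {b N r q M : ℤ} (hr : 0 ≤ r ∧ r < b)
    (hN : 0 ≤ N ∧ N < b * M) (hq : N - r = b * q) : 0 ≤ q ∧ q < M := by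
  have hb : 0 < b := hr.1.trans_lt hr.2
  constructor
  · by_contra! h
    nlinarith
  · by_contra! h
    nlinarith

theorem first_quotient_from_corrupted_remainders_general
    (k : ℕ) (hk : 0 < k) (d : ℤ)
    (m : Fin k → ℤ)
    (hcop : ∀ i j, i ≠ j → IsCoprime (m i) (m j))
    (M : ℤ) (hM : M = ∏ i, m i)
    (r : Fin k → ℤ) (hr : ∀ i, 0 ≤ r i ∧ r i < d * m i)
    (hcong : ∀ i j, d ∣ r i - r j)
    (N : ℤ) (hNrange : 0 ≤ N ∧ N < d * M)
    (hN : ∀ i, N ≡ r i [ZMOD d * m i])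
    (u : Fin k → ℤ)
    (hu : ∑ i, u i * ∏ j ∈ Finset.univ.erase i, m j = 1)
    (Δr : Fin k → ℤ) (hΔ : ∀ i, 4 * |Δr i| < d)
    (rb : Fin k → ℤ) (hrb : ∀ i, rb i = r i + Δr i)
    (q₁ : ℤ) (hq₁ : q₁ = (N - r ⟨0, hk⟩) / (d * m ⟨0, hk⟩))
    (M₁ : ℤ) (hM₁ : M₁ = ∏ i ∈ Finset.univ.erase (⟨0, hk⟩ : Fin k), m i)
    (S : ℤ)
    (hS : S = ∑ i ∈ Finset.univ.erase (⟨0, hk⟩ : Fin k),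
        (round (((rb i - rb ⟨0, hk⟩ : ℤ) : ℚ) / (d : ℚ))) * u i *
          ∏ l ∈ (Finset.univ.erase (⟨0, hk⟩ : Fin k)).erase i, m l) :
    (0 ≤ q₁ ∧ q₁ < M₁ ∧ q₁ ≡ S [ZMOD M₁]) ∧
      ∀ x : ℤ, 0 ≤ x → x < M₁ → x ≡ S [ZMOD M₁] → x = q₁ := by
  set i₀ : Fin k := ⟨0, hk⟩
  have hdm₀ : 0 < d * m i₀ := (hr i₀).1.trans_lt (hr i₀).2
  choose c hc using fun i => hcong i i₀
  have hq : N - r i₀ = d * m i₀ * q₁ := by rw [hq₁, Int.mul_ediv_cancel' (hN i₀).symm.dvd]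
  have hNM₁ : N < d * m i₀ * M₁ := by
    rw [hM₁, mul_assoc, Finset.mul_prod_erase _ _ (Finset.mem_univ _), ← hM]
    exact hNrange.2
  obtain ⟨hq₀, hqM₁⟩ := nonneg_and_lt_of_sub_eq_mul (hr i₀) ⟨hNrange.1, hNM₁⟩ hq
  have hround : ∀ i, round (((rb i - rb i₀ : ℤ) : ℚ) / d) = c i := fun i => by
    have hrbc : rb i - rb i₀ = d * c i + (Δr i - Δr i₀) := by rw [hrb, hrb]; linarith [hc i]
    rw [hrbc, round_intCast_mul_add_div]
    linarith [abs_sub (Δr i) (Δr i₀), hΔ i, hΔ i₀]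
  have hcongr : q₁ ≡ S [ZMOD M₁] := by
    rw [hM₁, hS]
    simp only [hround]
    refine modEq_sum_mul_prod_erase (fun i _ j _ hij => hcop i j hij)
      (fun i hi => hcop i i₀ (Finset.ne_of_mem_erase hi)) (fun i hi => ?_)
      (fun i _ => mul_quotient_modEq (left_ne_zero_of_mul hdm₀.ne') (hN i) hq (hc i))
    rw [Finset.erase_right_comm, Finset.mul_prod_erase _ _
      (Finset.mem_erase.2 ⟨(Finset.ne_of_mem_erase hi).symm, Finset.mem_univ _⟩)]
    simpa [hu] using (sum_mul_prod_erase_modEq Finset.univ u m (Finset.mem_univ i)).symm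
  refine ⟨⟨hq₀, hqM₁, hcongr⟩, fun x hx₀ hxM₁ hx => ?_⟩
  rw [← Int.emod_eq_of_lt hx₀ hxM₁, ← Int.emod_eq_of_lt hq₀ hqM₁]
  exact hx.trans hcongr.symm

/-- The quotient `q₁ = (N - r 0) / (d * m 0)` can be recovered exactly from the corrupted
remainders: it is the unique integer with `0 ≤ q₁ < M₁` (where `M₁ = M / m 0 = ∏ i ≠ 0, m i`)
satisfying `q₁ ≡ ∑_{i ≠ 0} round((r̄ i - r̄ 0) / d) * u i * (M₁ / m i)  (mod M₁)`. -/
theorem first_quotient_from_corrupted_remainders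
    (k : ℕ) (hk : 0 < k) (d : ℤ) (hd : 0 < d)
    (m : Fin k → ℤ) (hm : ∀ i, 0 < m i)
    (hcop : ∀ i j, i ≠ j → IsCoprime (m i) (m j))
    (M : ℤ) (hM : M = ∏ i, m i)
    (r : Fin k → ℤ) (hr : ∀ i, 0 ≤ r i ∧ r i < d * m i)
    (hcong : ∀ i j, d ∣ r i - r j)
    (N : ℤ) (hNrange : 0 ≤ N ∧ N < d * M)
    (hN : ∀ i, N ≡ r i [ZMOD d * m i])
    (u : Fin k → ℤ)
    (hu : ∑ i, u i * ∏ j ∈ Finset.univ.erase i, m j = 1)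
    (Δr : Fin k → ℤ) (hΔ : ∀ i, 4 * |Δr i| < d)
    (rb : Fin k → ℤ) (hrb : ∀ i, rb i = r i + Δr i)
    (q₁ : ℤ) (hq₁ : q₁ = (N - r ⟨0, hk⟩) / (d * m ⟨0, hk⟩))
    (M₁ : ℤ) (hM₁ : M₁ = ∏ i ∈ Finset.univ.erase (⟨0, hk⟩ : Fin k), m i)
    (S : ℤ)
    (hS : S = ∑ i ∈ Finset.univ.erase (⟨0, hk⟩ : Fin k),
        (round (((rb i - rb ⟨0, hk⟩ : ℤ) : ℚ) / (d : ℚ))) * u i *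
          ∏ l ∈ (Finset.univ.erase (⟨0, hk⟩ : Fin k)).erase i, m l) :
    (0 ≤ q₁ ∧ q₁ < M₁ ∧ q₁ ≡ S [ZMOD M₁]) ∧
      ∀ x : ℤ, 0 ≤ x → x < M₁ → x ≡ S [ZMOD M₁] → x = q₁ :=
  first_quotient_from_corrupted_remainders_general k hk d m hcop M hM r hr hcong N hNrange hN u hu
    Δr hΔ rb hrb q₁ hq₁ M₁ hM₁ S hS
end

section
/- For every i ∈ {2,…,k}, the quotients q_i = (N − r_i)/(d·m_i) and q_1 = (N − r_1)/(d·m_1) satisfy q_i·m_i = q_1·m_1 − [(r̄_i − r̄_1)/d], where [x] denotes the integer nearest to x (the hypotheses guarantee no ties occur); in particular m_i divides q_1·m_1 − [(r̄_i − r̄_1)/d] and q_i is exactly computable from q_1 and the corrupted remainders. -/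
/-!
Since `N ≡ r i [ZMOD d * m i]`, the quotients are exact: `q i * m i * d = N - r i`. Subtracting two
of these gives `r i - r₀ = d * (q₀ * m₀ - q i * m i)`, so the exact remainder difference is a
multiple of `d`. The corruptions move `rb i - rb₀` away from it by less than `d / 2`, hence
rounding `(rb i - rb₀) / d` recovers `q₀ * m₀ - q i * m i`.
-/

section Round

variable {α : Type*} [Field α] [LinearOrder α] [IsStrictOrderedRing α] [FloorRing α]

theorem round_eq_of_abs_sub_lt {x : α} {n : ℤ} (h : |x - n| < 1 / 2) : round x = n := by
  rw [round_eq_iff, Set.mem_Ico]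
  constructor <;> linarith [abs_lt.mp h]

theorem round_intCast_div_eq_of_two_mul_abs_sub_lt {a d t : ℤ} (hd : 0 < d)
    (h : 2 * |a - d * t| < d) : round ((a : α) / d) = t := by
  have hd' : (0 : α) < d := by exact_mod_cast hd
  have h' : 2 * |(a : α) - d * t| < d := by exact_mod_cast h
  apply round_eq_of_abs_sub_lt
  rw [show (a : α) / d - t = ((a : α) - d * t) / d by field_simp, abs_div, abs_of_pos hd',
    div_lt_iff₀ hd']
  linarith

theorem round_sub_div_eq_of_four_mul_abs_lt {r r' d s Δ Δ' : ℤ} (hd : 0 < d)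
    (hs : r - r' = d * s) (hΔ : 4 * |Δ| < d) (hΔ' : 4 * |Δ'| < d) :
    round ((((r + Δ) - (r' + Δ') : ℤ) : α) / d) = s := by
  apply round_intCast_div_eq_of_two_mul_abs_sub_lt hd
  have hdiff : (r + Δ) - (r' + Δ') - d * s = Δ - Δ' := by linear_combination hs
  rw [hdiff]
  linarith [abs_sub Δ Δ']

end Round

theorem sub_eq_mul_sub_of_modEq {N r r' d m m' : ℤ} (hN : N ≡ r [ZMOD d * m])
    (hN' : N ≡ r' [ZMOD d * m']) :
    r - r' = d * ((N - r') / (d * m') * m' - (N - r) / (d * m) * m) := by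
  have h := Int.ediv_mul_cancel hN.symm.dvd
  have h' := Int.ediv_mul_cancel hN'.symm.dvd
  linear_combination h - h'

theorem other_quotients_from_first_quotient_general
    (k : ℕ) (hk : 0 < k) (d : ℤ) (hd : 0 < d)
    (m : Fin k → ℤ) (hm : ∀ i, 0 < m i)
    (r : Fin k → ℤ)
    (N : ℤ)
    (hN : ∀ i, N ≡ r i [ZMOD d * m i])
    (Δr : Fin k → ℤ) (hΔ : ∀ i, 4 * |Δr i| < d)
    (rb : Fin k → ℤ) (hrb : ∀ i, rb i = r i + Δr i)
    (q : Fin k → ℤ) (hq : ∀ i, q i = (N - r i) / (d * m i)) :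
    ∀ i : Fin k, i ≠ ⟨0, hk⟩ →
      q i * m i = q ⟨0, hk⟩ * m ⟨0, hk⟩ -
          round (((rb i - rb ⟨0, hk⟩ : ℤ) : ℚ) / (d : ℚ)) ∧
      m i ∣ q ⟨0, hk⟩ * m ⟨0, hk⟩ -
          round (((rb i - rb ⟨0, hk⟩ : ℤ) : ℚ) / (d : ℚ)) ∧
      q i = (q ⟨0, hk⟩ * m ⟨0, hk⟩ -
          round (((rb i - rb ⟨0, hk⟩ : ℤ) : ℚ) / (d : ℚ))) / m i := by
  intro i _
  set i₀ : Fin k := ⟨0, hk⟩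
  have hdiff : r i - r i₀ = d * (q i₀ * m i₀ - q i * m i) := by
    rw [hq, hq]
    exact sub_eq_mul_sub_of_modEq (hN i) (hN i₀)
  have hround : round (((rb i - rb i₀ : ℤ) : ℚ) / d) = q i₀ * m i₀ - q i * m i := by
    rw [hrb, hrb]
    exact round_sub_div_eq_of_four_mul_abs_lt hd hdiff (hΔ i) (hΔ i₀)
  rw [hround, sub_sub_cancel]
  exact ⟨rfl, dvd_mul_left _ _, (Int.mul_ediv_cancel _ (hm i).ne').symm⟩

/-- For every `i ≠ 0`, the quotients `q i = (N - r i) / (d * m i)` and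
`q₁ = (N - r 0) / (d * m 0)` satisfy `q i * m i = q₁ * m 0 - round((r̄ i - r̄ 0) / d)`;
in particular `m i` divides `q₁ * m 0 - round((r̄ i - r̄ 0) / d)` and `q i` is computable
from `q₁` and the corrupted remainders. -/
theorem other_quotients_from_first_quotient
    (k : ℕ) (hk : 0 < k) (d : ℤ) (hd : 0 < d)
    (m : Fin k → ℤ) (hm : ∀ i, 0 < m i)
    (hcop : ∀ i j, i ≠ j → IsCoprime (m i) (m j))
    (M : ℤ) (hM : M = ∏ i, m i)
    (r : Fin k → ℤ) (hr : ∀ i, 0 ≤ r i ∧ r i < d * m i)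
    (hcong : ∀ i j, d ∣ r i - r j)
    (N : ℤ) (hNrange : 0 ≤ N ∧ N < d * M)
    (hN : ∀ i, N ≡ r i [ZMOD d * m i])
    (Δr : Fin k → ℤ) (hΔ : ∀ i, 4 * |Δr i| < d)
    (rb : Fin k → ℤ) (hrb : ∀ i, rb i = r i + Δr i)
    (q : Fin k → ℤ) (hq : ∀ i, q i = (N - r i) / (d * m i)) :
    ∀ i : Fin k, i ≠ ⟨0, hk⟩ →
      q i * m i = q ⟨0, hk⟩ * m ⟨0, hk⟩ -
          round (((rb i - rb ⟨0, hk⟩ : ℤ) : ℚ) / (d : ℚ)) ∧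
      m i ∣ q ⟨0, hk⟩ * m ⟨0, hk⟩ -
          round (((rb i - rb ⟨0, hk⟩ : ℤ) : ℚ) / (d : ℚ)) ∧
      q i = (q ⟨0, hk⟩ * m ⟨0, hk⟩ -
          round (((rb i - rb ⟨0, hk⟩ : ℤ) : ℚ) / (d : ℚ))) / m i :=
  other_quotients_from_first_quotient_general k hk d hd m hm r N hN Δr hΔ rb hrb q hq
end

section
/- (Case (a)) If a + Δr_i < 0 for all i = 1,…,k, then a < d/4 and α − β < d/4. -/
/-- Case (a): if `a + Δr i < 0` for all `i` (where `a = r 0 % d`), then `a < d / 4`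
and `α - β < d / 4`, where `α = max_i (r̄ i % d)` and `β = min_i (r̄ i % d)`. -/
theorem case_a_extreme_remainders
    (k : ℕ) (hk : 0 < k) (d : ℤ) (hd : 0 < d)
    (m : Fin k → ℤ) (hm : ∀ i, 0 < m i)
    (hcop : ∀ i j, i ≠ j → IsCoprime (m i) (m j))
    (r : Fin k → ℤ) (hr : ∀ i, 0 ≤ r i ∧ r i < d * m i)
    (hcong : ∀ i j, d ∣ r i - r j)
    (a : ℤ) (ha : a = r ⟨0, hk⟩ % d)
    (Δr : Fin k → ℤ) (hΔ : ∀ i, 4 * |Δr i| < d)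
    (rb : Fin k → ℤ) (hrb : ∀ i, rb i = r i + Δr i)
    (hrb_range : ∀ i, 0 ≤ rb i ∧ rb i < d * m i)
    (hne : (Finset.univ : Finset (Fin k)).Nonempty)
    (α : ℤ) (hα : α = Finset.univ.sup' hne (fun i => rb i % d))
    (β : ℤ) (hβ : β = Finset.univ.inf' hne (fun i => rb i % d))
    (hcase : ∀ i, a + Δr i < 0) :
    4 * a < d ∧ 4 * (α - β) < d := by
  have ha0 : 0 ≤ a := ha ▸ Int.emod_nonneg _ hd.ne'
  have hri : ∀ i, r i % d = a := by
    intro i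
    rw [ha]
    exact Int.emod_eq_emod_iff_emod_sub_eq_zero.mpr
      (Int.emod_eq_zero_of_dvd (hcong i ⟨0, hk⟩))
  have key : ∀ i, rb i % d = a + Δr i + d := by
    intro i
    have habs := abs_lt.mp (by linarith [hΔ i, abs_nonneg (Δr i)] : |Δr i| < d)
    obtain ⟨q, hq⟩ : ∃ q, r i = d * q + a :=
      ⟨r i / d, by rw [← hri i]; exact (Int.mul_ediv_add_emod (r i) d).symm⟩
    have heq : rb i = (a + Δr i + d) + (q - 1) * d := by rw [hrb i, hq]; ring
    rw [heq, Int.add_mul_emod_self_right]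
    exact Int.emod_eq_of_lt (by linarith [hcase i]) (by linarith [hcase i])
  obtain ⟨iα, -, hiα⟩ := Finset.exists_mem_eq_sup' hne (fun i => rb i % d)
  obtain ⟨iβ, -, hiβ⟩ := Finset.exists_mem_eq_inf' hne (fun i => rb i % d)
  have hαv : α = a + Δr iα + d := by rw [hα, hiα, key]
  have hβv : β = a + Δr iβ + d := by rw [hβ, hiβ, key]
  constructor
  · linarith [hΔ ⟨0, hk⟩, neg_abs_le (Δr ⟨0, hk⟩), hcase ⟨0, hk⟩]
  · have h1 := hcase iα
    have h2 : -d < 4 * Δr iβ := by linarith [hΔ iβ, neg_abs_le (Δr iβ)]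
    rw [hαv, hβv]
    linarith
end

section
/- (Case (b)) If a + Δr_i ≥ d for all i = 1,…,k, then α − β < d/4. -/
/-- Case (b): if `a + Δr i ≥ d` for all `i` (where `a = r 0 % d`), then `α - β < d / 4`,
where `α = max_i (r̄ i % d)` and `β = min_i (r̄ i % d)`. -/
theorem case_b_extreme_remainders
    (k : ℕ) (hk : 0 < k) (d : ℤ) (hd : 0 < d)
    (m : Fin k → ℤ) (hm : ∀ i, 0 < m i)
    (hcop : ∀ i j, i ≠ j → IsCoprime (m i) (m j))
    (r : Fin k → ℤ) (hr : ∀ i, 0 ≤ r i ∧ r i < d * m i)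
    (hcong : ∀ i j, d ∣ r i - r j)
    (a : ℤ) (ha : a = r ⟨0, hk⟩ % d)
    (Δr : Fin k → ℤ) (hΔ : ∀ i, 4 * |Δr i| < d)
    (rb : Fin k → ℤ) (hrb : ∀ i, rb i = r i + Δr i)
    (hrb_range : ∀ i, 0 ≤ rb i ∧ rb i < d * m i)
    (hne : (Finset.univ : Finset (Fin k)).Nonempty)
    (α : ℤ) (hα : α = Finset.univ.sup' hne (fun i => rb i % d))
    (β : ℤ) (hβ : β = Finset.univ.inf' hne (fun i => rb i % d))
    (hcase : ∀ i, d ≤ a + Δr i) :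
    4 * (α - β) < d := by
  have ha0 : 0 ≤ a := ha ▸ Int.emod_nonneg _ hd.ne'
  have had : a < d := ha ▸ Int.emod_lt_of_pos _ hd
  have key : ∀ i, rb i % d = a + Δr i - d := by
    intro i
    have hmod : r i % d = a := by
      rw [ha]; exact Int.modEq_iff_dvd.mpr (hcong ⟨0, hk⟩ i)
    have h1 : d ≤ a + Δr i := hcase i
    have h2 : a + Δr i < 2 * d := by
      have := (abs_lt.mp (by linarith [hΔ i] : |Δr i| < d)).2
      linarith
    have hq : d * (r i / d) + a = r i := by rw [← hmod]; exact Int.mul_ediv_add_emod _ _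
    have hrw : rb i = (a + Δr i - d) + d * (r i / d + 1) := by rw [hrb i]; linarith
    rw [hrw, Int.add_mul_emod_self_left]
    exact Int.emod_eq_of_lt (by linarith) (by linarith)
  obtain ⟨i, -, hi⟩ := Finset.exists_mem_eq_sup' hne (fun i => rb i % d)
  obtain ⟨j, -, hj⟩ := Finset.exists_mem_eq_inf' hne (fun i => rb i % d)
  have hαi : α = a + Δr i - d := by rw [hα, hi, key]
  have hβj : β = a + Δr j - d := by rw [hβ, hj, key]
  have hΔj : 0 < Δr j := by have := hcase j; linarith
  have := hΔ i
  have := (abs_lt.mp (by linarith : |Δr i| < d)).2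
  have h4i : 4 * Δr i < d := by
    have := le_abs_self (Δr i); linarith
  rw [hαi, hβj]
  linarith
end

section
/- (Case (d)) If there exist indices i₁ and j₁ with a + Δr_{i₁} < 0 and a + Δr_{j₁} ≥ 0, then a < d/4, the sets { i : r̄_i mod d > d/2 } and { i : r̄_i mod d < d/2 } are both nonempty, and α − β ≥ μ − ν > d/2. -/
/-- Case (d): if there exist indices `i₁, j₁` with `a + Δr i₁ < 0` and `a + Δr j₁ ≥ 0`,
then `a < d / 4`, the sets `{i : r̄ i % d > d / 2}` and `{i : r̄ i % d < d / 2}` are both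
nonempty, and `α - β ≥ μ - ν > d / 2`, where `μ` (resp. `ν`) is the minimum (resp. maximum)
of `r̄ i % d` over the first (resp. second) set. -/
theorem case_d_extreme_remainders
    (k : ℕ) (hk : 0 < k) (d : ℤ) (hd : 0 < d)
    (m : Fin k → ℤ) (hm : ∀ i, 0 < m i)
    (hcop : ∀ i j, i ≠ j → IsCoprime (m i) (m j))
    (r : Fin k → ℤ) (hr : ∀ i, 0 ≤ r i ∧ r i < d * m i)
    (hcong : ∀ i j, d ∣ r i - r j)
    (a : ℤ) (ha : a = r ⟨0, hk⟩ % d)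
    (Δr : Fin k → ℤ) (hΔ : ∀ i, 4 * |Δr i| < d)
    (rb : Fin k → ℤ) (hrb : ∀ i, rb i = r i + Δr i)
    (hrb_range : ∀ i, 0 ≤ rb i ∧ rb i < d * m i)
    (hne : (Finset.univ : Finset (Fin k)).Nonempty)
    (α : ℤ) (hα : α = Finset.univ.sup' hne (fun i => rb i % d))
    (β : ℤ) (hβ : β = Finset.univ.inf' hne (fun i => rb i % d))
    (i₁ j₁ : Fin k) (hi₁ : a + Δr i₁ < 0) (hj₁ : 0 ≤ a + Δr j₁) :
    4 * a < d ∧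
    ∃ (h₁ : (Finset.univ.filter (fun i => d < 2 * (rb i % d))).Nonempty)
      (h₂ : (Finset.univ.filter (fun i => 2 * (rb i % d) < d)).Nonempty),
      (Finset.univ.filter (fun i => d < 2 * (rb i % d))).inf' h₁ (fun i => rb i % d) -
          (Finset.univ.filter (fun i => 2 * (rb i % d) < d)).sup' h₂ (fun i => rb i % d)
        ≤ α - β ∧
      d < 2 * ((Finset.univ.filter (fun i => d < 2 * (rb i % d))).inf' h₁ (fun i => rb i % d) -
          (Finset.univ.filter (fun i => 2 * (rb i % d) < d)).sup' h₂ (fun i => rb i % d)) := by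

  have ha0 : 0 ≤ a := ha ▸ Int.emod_nonneg _ hd.ne'
  have had : a < d := ha ▸ Int.emod_lt_of_pos _ hd
  have hra : ∀ i, r i % d = a := by
    intro i
    rw [ha, Int.emod_eq_emod_iff_emod_sub_eq_zero]
    exact Int.emod_eq_zero_of_dvd (hcong i ⟨0, hk⟩)
  have hmod : ∀ i, rb i % d = (a + Δr i) % d := by
    intro i
    rw [hrb]
    have h1 : r i ≡ a [ZMOD d] := by
      show r i % d = a % d
      rw [hra i, Int.emod_eq_of_lt ha0 had]
    exact h1.add_right (Δr i)
  have habs : ∀ i, -d < 4 * Δr i ∧ 4 * Δr i < d := by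
    intro i
    constructor <;> linarith [le_abs_self (Δr i), neg_abs_le (Δr i), hΔ i]
  have h4a : 4 * a < d := by linarith [(habs i₁).1]
  have hpos : ∀ i, a + Δr i < 0 → rb i % d = a + Δr i + d := by
    intro i h
    have h2 : rb i % d = (a + Δr i + d * 1) % d := by
      rw [Int.add_mul_emod_self_left, hmod i]
    rw [h2, Int.emod_eq_of_lt (by linarith [(habs i).1]) (by linarith)]
    ring
  have hneg : ∀ i, 0 ≤ a + Δr i → rb i % d = a + Δr i := by
    intro i h
    rw [hmod i, Int.emod_eq_of_lt h (by linarith [(habs i).2])]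
  refine ⟨h4a, ?_, ?_, ?_, ?_⟩
  · exact ⟨i₁, Finset.mem_filter.mpr ⟨Finset.mem_univ _, by
      rw [hpos i₁ hi₁]; linarith [(habs i₁).1]⟩⟩
  · exact ⟨j₁, Finset.mem_filter.mpr ⟨Finset.mem_univ _, by
      rw [hneg j₁ hj₁]; linarith [(habs j₁).2]⟩⟩
  · obtain ⟨i, hi, hμ⟩ := Finset.exists_mem_eq_inf'
      (s := Finset.univ.filter (fun i => d < 2 * (rb i % d)))
      ⟨i₁, Finset.mem_filter.mpr ⟨Finset.mem_univ _, by
        rw [hpos i₁ hi₁]; linarith [(habs i₁).1]⟩⟩ (fun i => rb i % d)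
    obtain ⟨j, hj, hν⟩ := Finset.exists_mem_eq_sup'
      (s := Finset.univ.filter (fun i => 2 * (rb i % d) < d))
      ⟨j₁, Finset.mem_filter.mpr ⟨Finset.mem_univ _, by
        rw [hneg j₁ hj₁]; linarith [(habs j₁).2]⟩⟩ (fun i => rb i % d)
    rw [hμ, hν]
    have hi' : d < 2 * (rb i % d) := (Finset.mem_filter.mp hi).2
    have hj' : 2 * (rb j % d) < d := (Finset.mem_filter.mp hj).2
    have hineg : a + Δr i < 0 := by
      by_contra h
      push_neg at h
      rw [hneg i h] at hi'
      linarith [(habs i).2]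
    have hjpos : 0 ≤ a + Δr j := by
      by_contra h
      push_neg at h
      rw [hpos j h] at hj'
      linarith [(habs j).1]
    rw [hpos i hineg, hneg j hjpos]
    have h1 : rb i % d ≤ α := hα ▸ Finset.le_sup' (fun i => rb i % d) (Finset.mem_univ i)
    have h2 : β ≤ rb j % d := hβ ▸ Finset.inf'_le (fun i => rb i % d) (Finset.mem_univ j)
    rw [hpos i hineg] at h1; rw [hneg j hjpos] at h2
    linarith
  · obtain ⟨i, hi, hμ⟩ := Finset.exists_mem_eq_inf'
      (s := Finset.univ.filter (fun i => d < 2 * (rb i % d)))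
      ⟨i₁, Finset.mem_filter.mpr ⟨Finset.mem_univ _, by
        rw [hpos i₁ hi₁]; linarith [(habs i₁).1]⟩⟩ (fun i => rb i % d)
    obtain ⟨j, hj, hν⟩ := Finset.exists_mem_eq_sup'
      (s := Finset.univ.filter (fun i => 2 * (rb i % d) < d))
      ⟨j₁, Finset.mem_filter.mpr ⟨Finset.mem_univ _, by
        rw [hneg j₁ hj₁]; linarith [(habs j₁).2]⟩⟩ (fun i => rb i % d)
    rw [hμ, hν]
    have hi' : d < 2 * (rb i % d) := (Finset.mem_filter.mp hi).2
    have hj' : 2 * (rb j % d) < d := (Finset.mem_filter.mp hj).2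
    have hineg : a + Δr i < 0 := by
      by_contra h
      push_neg at h
      rw [hneg i h] at hi'
      linarith [(habs i).2]
    have hjpos : 0 ≤ a + Δr j := by
      by_contra h
      push_neg at h
      rw [hpos j h] at hj'
      linarith [(habs j).1]
    rw [hpos i hineg, hneg j hjpos]
    linarith [(habs i).1, (habs j).2]
end

section
/- (Case (e)) If there exist indices i₁ and j₁ with a + Δr_{i₁} < d and a + Δr_{j₁} ≥ d, then a > 3d/4, the sets { i : r̄_i mod d > d/2 } and { i : r̄_i mod d < d/2 } are both nonempty, and α − β ≥ μ − ν > d/2. -/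
/-- Case (e): if there exist indices `i₁, j₁` with `a + Δr i₁ < d` and `a + Δr j₁ ≥ d`,
then `a > 3 * d / 4`, the sets `{i : r̄ i % d > d / 2}` and `{i : r̄ i % d < d / 2}` are both
nonempty, and `α - β ≥ μ - ν > d / 2`, where `μ` (resp. `ν`) is the minimum (resp. maximum)
of `r̄ i % d` over the first (resp. second) set. -/
theorem case_e_extreme_remainders
    (k : ℕ) (hk : 0 < k) (d : ℤ) (hd : 0 < d)
    (m : Fin k → ℤ) (hm : ∀ i, 0 < m i)
    (hcop : ∀ i j, i ≠ j → IsCoprime (m i) (m j))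
    (r : Fin k → ℤ) (hr : ∀ i, 0 ≤ r i ∧ r i < d * m i)
    (hcong : ∀ i j, d ∣ r i - r j)
    (a : ℤ) (ha : a = r ⟨0, hk⟩ % d)
    (Δr : Fin k → ℤ) (hΔ : ∀ i, 4 * |Δr i| < d)
    (rb : Fin k → ℤ) (hrb : ∀ i, rb i = r i + Δr i)
    (hrb_range : ∀ i, 0 ≤ rb i ∧ rb i < d * m i)
    (hne : (Finset.univ : Finset (Fin k)).Nonempty)
    (α : ℤ) (hα : α = Finset.univ.sup' hne (fun i => rb i % d))
    (β : ℤ) (hβ : β = Finset.univ.inf' hne (fun i => rb i % d))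
    (i₁ j₁ : Fin k) (hi₁ : a + Δr i₁ < d) (hj₁ : d ≤ a + Δr j₁) :
    3 * d < 4 * a ∧
    ∃ (h₁ : (Finset.univ.filter (fun i => d < 2 * (rb i % d))).Nonempty)
      (h₂ : (Finset.univ.filter (fun i => 2 * (rb i % d) < d)).Nonempty),
      (Finset.univ.filter (fun i => d < 2 * (rb i % d))).inf' h₁ (fun i => rb i % d) -
          (Finset.univ.filter (fun i => 2 * (rb i % d) < d)).sup' h₂ (fun i => rb i % d)
        ≤ α - β ∧
      d < 2 * ((Finset.univ.filter (fun i => d < 2 * (rb i % d))).inf' h₁ (fun i => rb i % d) -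
          (Finset.univ.filter (fun i => 2 * (rb i % d) < d)).sup' h₂ (fun i => rb i % d)) := by
  have hΔ' : ∀ i, -d < 4 * Δr i ∧ 4 * Δr i < d := by
    intro i
    have h := hΔ i
    rcases abs_cases (Δr i) with ⟨h1, _⟩ | ⟨h1, _⟩ <;> constructor <;> nlinarith
  have ha0 : 0 ≤ a := ha ▸ Int.emod_nonneg _ hd.ne'
  have had : a < d := ha ▸ Int.emod_lt_of_pos _ hd
  have h3d : 3 * d < 4 * a := by
    have := (hΔ' j₁).2; linarith
  -- rb i % d = (a + Δr i) % d
  have hmod : ∀ i, rb i % d = (a + Δr i) % d := by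
    intro i
    have h0 : r i ≡ a [ZMOD d] := by
      have h1 : d ∣ r i - r ⟨0, hk⟩ := hcong i ⟨0, hk⟩
      have h2 : r i ≡ r ⟨0, hk⟩ [ZMOD d] := Int.ModEq.symm (Int.modEq_iff_dvd.mpr h1)
      have h3 : r ⟨0, hk⟩ ≡ a [ZMOD d] := by
        rw [ha]; exact (Int.emod_emod_of_dvd _ dvd_rfl).symm
      exact h2.trans h3
    have := (h0.add_right (Δr i))
    rw [hrb i]
    exact this
  have hnn : ∀ i, 0 ≤ rb i % d := fun i => Int.emod_nonneg _ hd.ne'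
  have hlt : ∀ i, rb i % d < d := fun i => Int.emod_lt_of_pos _ hd
  -- key dichotomy
  have hkey : ∀ i, (d < 2 * (rb i % d) ∧ rb i % d = a + Δr i) ∨
      (2 * (rb i % d) < d ∧ rb i % d = a + Δr i - d) := by
    intro i
    have hΔi := hΔ' i
    by_cases hcase : a + Δr i < d
    · left
      have h0 : 0 ≤ a + Δr i := by linarith
      have heq : rb i % d = a + Δr i := by
        rw [hmod i, Int.emod_eq_of_lt h0 hcase]
      constructor
      · rw [heq]; linarith
      · exact heq
    · right
      push_neg at hcase
      have h0 : 0 ≤ a + Δr i - d := by linarith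
      have h1 : a + Δr i - d < d := by linarith
      have heq : rb i % d = a + Δr i - d := by
        have hm2 : (a + Δr i) % d = (a + Δr i - d) % d := by
          conv_lhs => rw [show a + Δr i = (a + Δr i - d) + 1 * d by ring]
          rw [Int.add_mul_emod_self_right]
        rw [hmod i, hm2, Int.emod_eq_of_lt h0 h1]
      constructor
      · rw [heq]; linarith
      · exact heq
  have hne1 : (Finset.univ.filter (fun i => d < 2 * (rb i % d))).Nonempty := by
    refine ⟨i₁, Finset.mem_filter.mpr ⟨Finset.mem_univ _, ?_⟩⟩
    rcases hkey i₁ with ⟨h1, _⟩ | ⟨_, h2⟩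
    · exact h1
    · exfalso; have := hnn i₁; omega
  have hne2 : (Finset.univ.filter (fun i => 2 * (rb i % d) < d)).Nonempty := by
    refine ⟨j₁, Finset.mem_filter.mpr ⟨Finset.mem_univ _, ?_⟩⟩
    rcases hkey j₁ with ⟨_, h1⟩ | ⟨h2, _⟩
    · exfalso; have := hlt j₁; omega
    · exact h2
  refine ⟨h3d, hne1, hne2, ?_, ?_⟩
  all_goals {
    obtain ⟨i, hiS, hie⟩ := Finset.exists_mem_eq_inf' hne1 (fun i => rb i % d)
    obtain ⟨j, hjS, hje⟩ := Finset.exists_mem_eq_sup' hne2 (fun i => rb i % d)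
    rw [hie, hje]
    have hiF := (Finset.mem_filter.mp hiS).2
    have hjF := (Finset.mem_filter.mp hjS).2
    first
    | -- μ - ν ≤ α - β
      (have h1 : rb i % d ≤ α := hα ▸ Finset.le_sup' (fun i => rb i % d) (Finset.mem_univ i)
       have h2 : β ≤ rb j % d := hβ ▸ Finset.inf'_le (fun i => rb i % d) (Finset.mem_univ j)
       linarith)
    | -- d < 2 (μ - ν)
      (have hμ : rb i % d = a + Δr i := by
         rcases hkey i with ⟨_, h⟩ | ⟨h, _⟩
         · exact h
         · omega
       have hν : rb j % d = a + Δr j - d := by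
         rcases hkey j with ⟨h, _⟩ | ⟨_, h⟩
         · omega
         · exact h
       have h1 := (hΔ' i).1
       have h2 := (hΔ' j).2
       rw [hμ, hν]
       linarith)
  }
end

section
/- (Proposition 2, case (d)) If there exist indices i₁ and j₁ with a + Δr_{i₁} < 0 and a + Δr_{j₁} ≥ 0, then the set { i : r̄_i mod d > d/2 } is nonempty and, with μ = min{ r̄_i mod d : r̄_i mod d > d/2 }, one has ⌊(r̄_i + d − μ)/d⌋ = γ_i for all i = 1,…,k. -/
/-- Proposition 2, case (d): if there exist indices `i₁, j₁` with `a + Δr i₁ < 0` and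
`a + Δr j₁ ≥ 0` (where `a = r 0 % d` and `γ i = (r i - a) / d`), then the set
`{i : r̄ i % d > d / 2}` is nonempty and, with `μ` its minimum value of `r̄ i % d`,
one has `⌊(r̄ i + d - μ) / d⌋ = γ i` for all `i`. -/
theorem prop2_case_d
    (k : ℕ) (hk : 0 < k) (d : ℤ) (hd : 0 < d)
    (m : Fin k → ℤ) (hm : ∀ i, 0 < m i)
    (hcop : ∀ i j, i ≠ j → IsCoprime (m i) (m j))
    (r : Fin k → ℤ) (hr : ∀ i, 0 ≤ r i ∧ r i < d * m i)
    (hcong : ∀ i j, d ∣ r i - r j)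
    (a : ℤ) (ha : a = r ⟨0, hk⟩ % d)
    (γ : Fin k → ℤ) (hγ : ∀ i, γ i = (r i - a) / d)
    (Δr : Fin k → ℤ) (hΔ : ∀ i, 4 * |Δr i| < d)
    (rb : Fin k → ℤ) (hrb : ∀ i, rb i = r i + Δr i)
    (hrb_range : ∀ i, 0 ≤ rb i ∧ rb i < d * m i)
    (i₁ j₁ : Fin k) (hi₁ : a + Δr i₁ < 0) (hj₁ : 0 ≤ a + Δr j₁) :
    ∃ h₁ : (Finset.univ.filter (fun i => d < 2 * (rb i % d))).Nonempty,
      ∀ i, (rb i + d -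
          (Finset.univ.filter (fun i => d < 2 * (rb i % d))).inf' h₁ (fun i => rb i % d)) / d
        = γ i := by
  have hd' : d ≠ 0 := hd.ne'
  have ha0 : 0 ≤ a := ha ▸ Int.emod_nonneg _ hd'
  have ha4 : 4 * a < d := by
    have h1 := hΔ i₁
    have : a < |Δr i₁| := by
      rcases abs_cases (Δr i₁) with ⟨h, _⟩ | ⟨h, _⟩ <;> linarith
    linarith
  -- r i = d * γ i + a
  have hkey : ∀ i, r i = d * γ i + a := by
    intro i
    have hdvd : d ∣ r i - a := by
      have h1 := hcong i ⟨0, hk⟩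
      have h2 : d ∣ r ⟨0, hk⟩ - a := by
        rw [ha]; exact Int.dvd_self_sub_of_emod_eq rfl
      have := dvd_add h1 h2
      simpa using this
    have h2 : d * γ i = r i - a := by
      rw [hγ, mul_comm]; exact Int.ediv_mul_cancel hdvd
    linarith
  have hmod : ∀ i, rb i % d = if a + Δr i < 0 then a + Δr i + d else a + Δr i := by
    intro i
    have h1 : rb i = (a + Δr i) + d * γ i := by rw [hrb, hkey]; ring
    have h2 : rb i % d = (a + Δr i) % d := by
      rw [h1]; simp [Int.add_mul_emod_self_left]
    have hΔi := hΔ i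
    have habs : -d < 4 * Δr i ∧ 4 * Δr i < d := by
      rcases abs_cases (Δr i) with ⟨h, _⟩ | ⟨h, _⟩ <;> constructor <;> linarith
    split_ifs with hcase
    · rw [h2, ← Int.add_mul_emod_self_left (b := d) (c := 1), mul_one]
      exact Int.emod_eq_of_lt (by linarith [habs.1]) (by linarith)
    · rw [h2]
      exact Int.emod_eq_of_lt (by linarith) (by linarith [habs.2, ha4])
  have hmem : ∀ i, (i ∈ Finset.univ.filter (fun i => d < 2 * (rb i % d))) ↔ a + Δr i < 0 := by
    intro i
    simp only [Finset.mem_filter, Finset.mem_univ, true_and]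
    have hΔi := hΔ i
    have habs : -d < 4 * Δr i ∧ 4 * Δr i < d := by
      rcases abs_cases (Δr i) with ⟨h, _⟩ | ⟨h, _⟩ <;> constructor <;> linarith
    rw [hmod i]
    split_ifs with hcase
    · simp only [hcase, iff_true]; linarith [habs.1]
    · simp only [hcase, iff_false, not_lt]; linarith [habs.2, ha4]
  have h₁ : (Finset.univ.filter (fun i => d < 2 * (rb i % d))).Nonempty :=
    ⟨i₁, (hmem i₁).mpr hi₁⟩
  refine ⟨h₁, fun i => ?_⟩
  obtain ⟨i₀, hi₀mem, hμ⟩ := Finset.exists_mem_eq_inf'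
    h₁ (fun i => rb i % d)
  have hi₀ : a + Δr i₀ < 0 := (hmem i₀).mp hi₀mem
  rw [hμ]
  have hμval : rb i₀ % d = a + Δr i₀ + d := by rw [hmod]; simp [hi₀]
  have hΔi := hΔ i
  have hΔi₀ := hΔ i₀
  have habsi : -d < 4 * Δr i ∧ 4 * Δr i < d := by
    rcases abs_cases (Δr i) with ⟨h, _⟩ | ⟨h, _⟩ <;> constructor <;> linarith
  have habsi₀ : -d < 4 * Δr i₀ ∧ 4 * Δr i₀ < d := by
    rcases abs_cases (Δr i₀) with ⟨h, _⟩ | ⟨h, _⟩ <;> constructor <;> linarith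
  have ht0 : 0 ≤ Δr i - Δr i₀ := by
    by_cases hcase : a + Δr i < 0
    · have hle : rb i₀ % d ≤ rb i % d := by
        rw [← hμ]; exact Finset.inf'_le _ ((hmem i).mpr hcase)
      rw [hμval, hmod i] at hle
      simp only [hcase, if_pos, if_true] at hle
      linarith
    · push_neg at hcase; linarith
  have ht1 : Δr i - Δr i₀ < d := by linarith [habsi.2, habsi₀.1]
  have heq : rb i + d - rb i₀ % d = (Δr i - Δr i₀) + d * γ i := by
    rw [hμval, hrb, hkey]; ring
  rw [heq, Int.add_mul_ediv_left _ _ hd', Int.ediv_eq_zero_of_lt ht0 ht1, zero_add]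
end

section
/- (Proposition 2, case (e)) If there exist indices i₁ and j₁ with a + Δr_{i₁} < d and a + Δr_{j₁} ≥ d, then the set { i : r̄_i mod d > d/2 } is nonempty and, with μ = min{ r̄_i mod d : r̄_i mod d > d/2 }, one has ⌊(r̄_i + d − μ)/d⌋ = γ_i + 1 for all i = 1,…,k. -/
/-- Proposition 2, case (e): if there exist indices `i₁, j₁` with `a + Δr i₁ < d` and
`a + Δr j₁ ≥ d` (where `a = r 0 % d` and `γ i = (r i - a) / d`), then the set
`{i : r̄ i % d > d / 2}` is nonempty and, with `μ` its minimum value of `r̄ i % d`,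
one has `⌊(r̄ i + d - μ) / d⌋ = γ i + 1` for all `i`. -/
theorem prop2_case_e
    (k : ℕ) (hk : 0 < k) (d : ℤ) (hd : 0 < d)
    (m : Fin k → ℤ) (hm : ∀ i, 0 < m i)
    (hcop : ∀ i j, i ≠ j → IsCoprime (m i) (m j))
    (r : Fin k → ℤ) (hr : ∀ i, 0 ≤ r i ∧ r i < d * m i)
    (hcong : ∀ i j, d ∣ r i - r j)
    (a : ℤ) (ha : a = r ⟨0, hk⟩ % d)
    (γ : Fin k → ℤ) (hγ : ∀ i, γ i = (r i - a) / d)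
    (Δr : Fin k → ℤ) (hΔ : ∀ i, 4 * |Δr i| < d)
    (rb : Fin k → ℤ) (hrb : ∀ i, rb i = r i + Δr i)
    (hrb_range : ∀ i, 0 ≤ rb i ∧ rb i < d * m i)
    (i₁ j₁ : Fin k) (hi₁ : a + Δr i₁ < d) (hj₁ : d ≤ a + Δr j₁) :
    ∃ h₁ : (Finset.univ.filter (fun i => d < 2 * (rb i % d))).Nonempty,
      ∀ i, (rb i + d -
          (Finset.univ.filter (fun i => d < 2 * (rb i % d))).inf' h₁ (fun i => rb i % d)) / d
        = γ i + 1 := by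
  have ha0 : 0 ≤ a := ha ▸ Int.emod_nonneg _ hd.ne'
  have halt : a < d := ha ▸ Int.emod_lt_of_pos _ hd
  have hΔ' : ∀ i, -d < 4 * Δr i ∧ 4 * Δr i < d := by
    intro i
    have h := hΔ i
    rcases abs_cases (Δr i) with ⟨h1, _⟩ | ⟨h1, _⟩ <;> constructor <;> linarith
  have ha3 : 3 * d < 4 * a := by have := (hΔ' j₁).2; linarith
  have hdvd : ∀ i, d ∣ r i - a := by
    intro i
    have h1 := hcong i ⟨0, hk⟩
    have h2 : d ∣ r ⟨0, hk⟩ - a :=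
      ⟨r ⟨0, hk⟩ / d, by rw [ha]; have := Int.mul_ediv_add_emod (r ⟨0, hk⟩) d; linarith⟩
    have : r i - a = (r i - r ⟨0, hk⟩) + (r ⟨0, hk⟩ - a) := by ring
    rw [this]; exact dvd_add h1 h2
  have hγd : ∀ i, r i = d * γ i + a := by
    intro i
    have := Int.ediv_mul_cancel (hdvd i)
    rw [hγ i]; linarith [Int.ediv_mul_cancel (hdvd i)]
  -- rb i = d * γ i + (a + Δr i)
  have hrbγ : ∀ i, rb i = d * γ i + (a + Δr i) := by
    intro i; rw [hrb i, hγd i]; ring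
  -- value of rb i % d
  have hmod : ∀ i, rb i % d = if a + Δr i < d then a + Δr i else a + Δr i - d := by
    intro i
    have h1 : rb i % d = (a + Δr i) % d := by
      have e : rb i = (a + Δr i) + d * γ i := by rw [hrbγ i]; ring
      rw [e, Int.add_mul_emod_self_left]
    rw [h1]
    have h2 := (hΔ' i).1
    have h3 := (hΔ' i).2
    split
    · exact Int.emod_eq_of_lt (by linarith) (by assumption)
    · have e : a + Δr i = (a + Δr i - d) + d * 1 := by ring
      rw [e, Int.add_mul_emod_self_left]
      rw [show a + Δr i - d + d * 1 - d = a + Δr i - d by ring]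
      exact Int.emod_eq_of_lt (by omega) (by linarith)
  -- membership in the filter set
  have hmem : ∀ i, (i ∈ Finset.univ.filter (fun i => d < 2 * (rb i % d))) ↔ a + Δr i < d := by
    intro i
    simp only [Finset.mem_filter, Finset.mem_univ, true_and]
    rw [hmod i]
    have h2 := (hΔ' i).1
    have h3 := (hΔ' i).2
    split <;> constructor <;> intro h <;> first | linarith | omega
  have h₁ : (Finset.univ.filter (fun i => d < 2 * (rb i % d))).Nonempty :=
    ⟨i₁, (hmem i₁).mpr hi₁⟩
  refine ⟨h₁, fun i => ?_⟩
  set S := Finset.univ.filter (fun i => d < 2 * (rb i % d)) with hS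
  set μ := S.inf' h₁ (fun i => rb i % d) with hμ
  obtain ⟨i₀, hi₀S, hi₀⟩ := Finset.exists_mem_eq_inf' h₁ (fun i => rb i % d)
  have hi₀lt : a + Δr i₀ < d := (hmem i₀).mp hi₀S
  have hμval : μ = a + Δr i₀ := by
    rw [hμ, hi₀, hmod i₀, if_pos hi₀lt]
  have hμle : ∀ j, j ∈ S → μ ≤ rb j % d := fun j hj => Finset.inf'_le _ hj
  -- the remainder t = a + Δr i - μ satisfies 0 ≤ t < d
  have ht0 : 0 ≤ a + Δr i - μ := by
    by_cases hc : a + Δr i < d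
    · have := hμle i ((hmem i).mpr hc)
      rw [hmod i, if_pos hc] at this
      linarith
    · push_neg at hc
      rw [hμval]; linarith
  have htd : a + Δr i - μ < d := by
    rw [hμval]
    have := (hΔ' i).2
    have := (hΔ' i₀).1
    linarith
  have key : rb i + d - μ = d * (γ i + 1) + (a + Δr i - μ) := by
    rw [hrbγ i]; ring
  rw [key, add_comm (d * (γ i + 1)), Int.add_mul_ediv_left _ _ hd.ne',
    Int.ediv_eq_zero_of_lt ht0 htd, zero_add]
end

section
/- (Sharpness of the bound d/4) For every positive integer d divisible by 4 and every positive integer B, there exist coprime positive integers m_1, m_2, integers r_1, r_2, r_1', r_2', and integers N_1, N_2 with 0 ≤ N_1, N_2 < d·m_1·m_2, such that: N_1 ≡ r_1 (mod d·m_1) and N_1 ≡ r_2 (mod d·m_2); N_2 ≡ r_1' (mod d·m_1) and N_2 ≡ r_2' (mod d·m_2); the single pair of corrupted remainders r̄_1 = d, r̄_2 = 3d/2 satisfies |r̄_1 − r_1| ≤ d/4, |r̄_2 − r_2| ≤ d/4, |r̄_1 − r_1'| ≤ d/4, |r̄_2 − r_2'| ≤ d/4; and |N_1 − N_2| > B.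 In particular, no reconstruction from corrupted remainders with errors merely bounded by d/4 (non-strictly) can approximate the true solution within any fixed error. -/
/-- Sharpness of the bound `d / 4`: for every positive integer `d` divisible by `4` and
every positive integer `B`, there are coprime moduli `m₁, m₂`, valid remainder pairs
`(r₁, r₂)` and `(r₁', r₂')` with respective solutions `N₁, N₂` in `[0, d * m₁ * m₂)`,
such that the single corrupted pair `r̄₁ = d`, `r̄₂ = 3 * d / 2` is within (non-strict)
error `d / 4` of both remainder pairs, while `|N₁ - N₂| > B`. -/
theorem sharpness_of_quarter_d_bound
    (d B : ℤ) (hd : 0 < d) (hd4 : 4 ∣ d) (hB : 0 < B) :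
    ∃ m₁ m₂ r₁ r₂ r₁' r₂' N₁ N₂ : ℤ,
      0 < m₁ ∧ 0 < m₂ ∧ IsCoprime m₁ m₂ ∧
      (0 ≤ r₁ ∧ r₁ < d * m₁) ∧ (0 ≤ r₂ ∧ r₂ < d * m₂) ∧ d ∣ r₁ - r₂ ∧
      (0 ≤ r₁' ∧ r₁' < d * m₁) ∧ (0 ≤ r₂' ∧ r₂' < d * m₂) ∧ d ∣ r₁' - r₂' ∧
      (0 ≤ N₁ ∧ N₁ < d * m₁ * m₂) ∧ (0 ≤ N₂ ∧ N₂ < d * m₁ * m₂) ∧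
      N₁ ≡ r₁ [ZMOD d * m₁] ∧ N₁ ≡ r₂ [ZMOD d * m₂] ∧
      N₂ ≡ r₁' [ZMOD d * m₁] ∧ N₂ ≡ r₂' [ZMOD d * m₂] ∧
      4 * |d - r₁| ≤ d ∧ 4 * |3 * d / 2 - r₂| ≤ d ∧
      4 * |d - r₁'| ≤ d ∧ 4 * |3 * d / 2 - r₂'| ≤ d ∧
      B < |N₁ - N₂| := by
  obtain ⟨c, rfl⟩ := hd4
  have hc : 0 < c := by linarith
  refine ⟨2, 2 * B + 1, 5 * c, 5 * c, 3 * c, 7 * c, 5 * c, 11 * c + 8 * c * B,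
    by norm_num, by linarith, ⟨-B, 1, by ring⟩, ?_⟩
  have habs : ∀ x : ℤ, x = c ∨ x = -c → 4 * |x| ≤ 4 * c := by
    rintro x (rfl | rfl) <;> simp [abs_of_nonneg hc.le, abs_of_nonpos, hc.le]
  have hdiv : (3 : ℤ) * (4 * c) / 2 = 6 * c := by omega
  refine ⟨⟨by positivity, by linarith⟩, ⟨by positivity, by nlinarith⟩, ⟨0, by ring⟩,
    ⟨by positivity, by linarith⟩, ⟨by positivity, by nlinarith⟩, ⟨-1, by ring⟩,
    ⟨by positivity, by nlinarith⟩, ⟨by positivity, by nlinarith⟩,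
    Int.ModEq.refl _, Int.ModEq.refl _,
    (Int.modEq_iff_dvd.mpr ⟨-(1 + B), by ring⟩),
    (Int.modEq_iff_dvd.mpr ⟨-1, by ring⟩), ?_, ?_, ?_, ?_, ?_⟩
  · exact habs _ (Or.inr (by ring))
  · rw [hdiv]; exact habs _ (Or.inl (by ring))
  · exact habs _ (Or.inl (by ring))
  · rw [hdiv]; exact habs _ (Or.inr (by ring))
  · have : |5 * c - (11 * c + 8 * c * B)| = 6 * c + 8 * c * B := by
      rw [show 5 * c - (11 * c + 8 * c * B) = -(6 * c + 8 * c * B) by ring, abs_neg,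
        abs_of_nonneg (by positivity)]
    rw [this]; nlinarith
end
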